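/- arXiv:2411.17330 — 4 statements merged into one kernel-verified Lean document; each statement's English description precedes it below -/
import Mathlib

section
/- Let F be a field of characteristic 0, let f, g ∈ F[z₁,…,zₙ] be nonzero polynomials with g irreducible, and let z ∈ {z₁,…,zₙ} be a variable such that ∂g/∂z ≠ 0. Then the multiplicity of g in f (the largest integer e ≥ 0 such that g^e divides f) equals the smallest non-negative integer e such that g does not divide ∂^e f/∂z^e. -/
open MvPolynomial

private lemma degOf_pderiv_lt {F : Type*} [Field F] [CharZero F] {n : ℕ} (i : Fin n)
    {g : MvPolynomial (Fin n) F} (hgz : pderiv i g ≠ 0) :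
    degreeOf i (pderiv i g) < degreeOf i g := by
  classical
  have hrep : pderiv i g = ∑ s ∈ g.support, monomial (s - Finsupp.single i 1) (coeff s g * s i) := by
    conv_lhs => rw [g.as_sum]
    rw [map_sum]
    simp [pderiv_monomial]
  have hsup : ∀ m ∈ (pderiv i g).support, m i < degreeOf i g := by
    intro m hmem
    rw [hrep] at hmem
    have := MvPolynomial.support_sum hmem
    obtain ⟨s, hs, hm⟩ := Finset.mem_biUnion.mp this
    rw [support_monomial] at hm
    by_cases hc : coeff s g * (s i : F) = 0
    · simp [hc] at hm
    · simp [hc] at hm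
      have hsi : s i ≠ 0 := by
        intro h0
        simp [h0] at hc
      have h1 : m i = s i - 1 := by
        subst hm; simp [Finsupp.tsub_apply]
      have h2 : s i ≤ degreeOf i g := monomial_le_degreeOf i hs
      omega
  obtain ⟨m0, hm0⟩ := (support_nonempty.mpr hgz)
  have hpos : 0 < degreeOf i g := lt_of_le_of_lt (Nat.zero_le _) (hsup m0 hm0)
  rw [degreeOf_lt_iff hpos]
  exact hsup

private lemma degOf_le_of_dvd {F : Type*} [Field F] {n : ℕ} (i : Fin n)
    {p q : MvPolynomial (Fin n) F} (h : p ∣ q) (hq : q ≠ 0) :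
    degreeOf i p ≤ degreeOf i q := by
  cases n with
  | zero => exact i.elim0
  | succ n =>
    set e : Fin (n+1) ≃ Fin (n+1) := Equiv.swap i 0 with he
    have hdvd : rename e p ∣ rename e q := map_dvd (rename (R := F) ⇑e) h
    have hq' : rename e q ≠ 0 := by
      intro h0
      exact hq ((renameEquiv F e).injective (by simpa using h0))
    have hP : degreeOf 0 (rename e p) = degreeOf i p := by
      have := degreeOf_rename_of_injective (e.injective) (p := p) (f := ⇑e) i
      rwa [show e i = 0 from Equiv.swap_apply_left i 0] at this
    have hQ : degreeOf 0 (rename e q) = degreeOf i q := by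
      have := degreeOf_rename_of_injective (e.injective) (p := q) (f := ⇑e) i
      rwa [show e i = 0 from Equiv.swap_apply_left i 0] at this
    rw [← hP, ← hQ, ← natDegree_finSuccEquiv, ← natDegree_finSuccEquiv]
    apply Polynomial.natDegree_le_of_dvd
    · exact map_dvd (finSuccEquiv F n).toAlgHom hdvd
    · intro h0
      exact hq' ((finSuccEquiv F n).injective (by simpa using h0))

private lemma key_step {F : Type*} [Field F] [CharZero F] {n : ℕ} (i : Fin n)
    {g p : MvPolynomial (Fin n) F} (hg : Irreducible g) (hgz : pderiv i g ≠ 0)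
    (k : ℕ) (h1 : g ^ (k + 1) ∣ p) (h2 : ¬ g ^ (k + 2) ∣ p) :
    g ^ k ∣ pderiv i p ∧ ¬ g ^ (k + 1) ∣ pderiv i p := by
  have hprime : Prime g := UniqueFactorizationMonoid.irreducible_iff_prime.mp hg
  obtain ⟨h, rfl⟩ := h1
  have hgh : ¬ g ∣ h := by
    intro hd
    exact h2 (by
      obtain ⟨c, rfl⟩ := hd
      exact ⟨c, by ring⟩)
  have hder : pderiv i (g ^ (k+1) * h)
      = g ^ k * (((k:ℕ)+1) * pderiv i g * h + g * pderiv i h) := by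
    rw [pderiv_mul, pderiv_pow, Nat.add_sub_cancel]
    push_cast
    ring
  set u := (((k:ℕ)+1 : MvPolynomial (Fin n) F) * pderiv i g * h + g * pderiv i h) with hu
  have hgu : ¬ g ∣ u := by
    intro hd
    have hd1 : g ∣ ((k:ℕ)+1 : MvPolynomial (Fin n) F) * pderiv i g * h :=
      (dvd_add_left (dvd_mul_right g (pderiv i h))).mp hd
    have hunit : IsUnit (((k:ℕ)+1 : MvPolynomial (Fin n) F)) := by
      have hC : (((k:ℕ)+1 : MvPolynomial (Fin n) F)) = C (((k:ℕ)+1 : F)) := by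
        rw [map_add, map_one, C_eq_coe_nat]
      rw [hC]
      exact (isUnit_iff_ne_zero.mpr (by exact_mod_cast Nat.succ_ne_zero k)).map C
    rcases (hprime.dvd_mul.mp hd1) with hdl | hdr
    · rcases (hprime.dvd_mul.mp hdl) with hdc | hdg
      · exact hprime.not_unit (isUnit_of_dvd_unit hdc hunit)
      · have := degOf_le_of_dvd i hdg hgz
        exact absurd this (not_le.mpr (degOf_pderiv_lt i hgz))
    · exact hgh hdr
  constructor
  · rw [hder]; exact Dvd.intro _ rfl
  · rw [hder]
    intro hd
    rw [pow_succ] at hd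
    exact hgu ((mul_dvd_mul_iff_left (pow_ne_zero k hg.ne_zero)).mp hd)

/-- Over a field of characteristic 0, if `f, g` are nonzero, `g` is
irreducible and `∂g/∂z ≠ 0` for a variable `z = zᵢ`, then the multiplicity `m` of `g`
in `f` (i.e. `g^m ∣ f` and `g^(m+1) ∤ f`) is the smallest `e ≥ 0` with
`g ∤ ∂^e f/∂z^e`; that is, `g ∤ ∂^m f/∂z^m` and `g ∣ ∂^e f/∂z^e` for all `e < m`. -/
theorem stmt3 {F : Type*} [Field F] [CharZero F] (n : ℕ)
    (f g : MvPolynomial (Fin n) F) (hf : f ≠ 0) (hg0 : g ≠ 0) (hg : Irreducible g)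
    (i : Fin n) (hgz : MvPolynomial.pderiv i g ≠ 0)
    (m : ℕ) (hm : g ^ m ∣ f) (hm' : ¬ g ^ (m + 1) ∣ f) :
    ¬ g ∣ (⇑(MvPolynomial.pderiv i))^[m] f ∧
    ∀ e < m, g ∣ (⇑(MvPolynomial.pderiv i))^[e] f := by
  have H : ∀ e, e ≤ m → g ^ (m - e) ∣ (⇑(pderiv i))^[e] f ∧
      ¬ g ^ (m - e + 1) ∣ (⇑(pderiv i))^[e] f := by
    intro e
    induction e with
    | zero => intro _; simpa using ⟨hm, hm'⟩
    | succ e ih =>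
      intro he
      obtain ⟨h1, h2⟩ := ih (Nat.le_of_succ_le he)
      have e1 : m - e = (m - (e+1)) + 1 := by omega
      have e2 : m - e + 1 = (m - (e+1)) + 2 := by omega
      rw [e1] at h1; rw [e2] at h2
      have := key_step i hg hgz (m - (e+1)) h1 h2
      rwa [Function.iterate_succ_apply']
  constructor
  · have := (H m le_rfl).2
    simpa using this
  · intro e he
    have := (H e he.le).1
    exact dvd_trans (dvd_pow_self g (by omega)) this
end

section
/- Let f, g ∈ ℚ[z₁,…,zₙ] be polynomials of total degree at most d, let S = {1, 2, …, 2d²+1} ⊆ ℚ, and let α ∈ ℚⁿ with g(α) ≠ 0. Then there exist constants c_{β,i} ∈ ℚ for β ∈ S and 0 ≤ i ≤ d such that, defining h̃(z₁,…,zₙ) = Σ_{β ∈ S} f(βz₁+α₁,…,βzₙ+αₙ) · Σ_{i=0}^{d} c_{β,i} · g(βz₁+α₁,…,βzₙ+αₙ)^i, one has: g divides f in ℚ[z₁,…,zₙ] if and only if f(z₁+α₁,…,zₙ+αₙ) = g(z₁+α₁,…,zₙ+αₙ) · h̃(z₁,…,zₙ). -/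
/-!
Suppose `f = g q` and write `p̃ = p(z + α)`. With `γ = g(α) ≠ 0` and `P` the degree-`d` Taylor
polynomial of `1/x` at `γ`, one has `g̃ P(g̃) = 1 - w ^ (d + 1)`, where `w = 1 - g̃/γ` has no
constant term. Hence `H = f̃ P(g̃) = q̃ (1 - w ^ (d + 1))` agrees with `q̃` in degrees `≤ d`, and
`deg H ≤ d + d² ≤ 2d²`. As `deg q̃ ≤ d`, `q̃` is the part of `H` of degree `≤ d`, which Lagrange
interpolation at the nodes `β ∈ {1, …, 2d² + 1}` extracts from the `H(βz) = f(βz+α) P(g(βz+α))`.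
If `g ∤ f`, all `c_{β,i} = 0` work, since `f̃ ≠ 0`.
-/

open MvPolynomial

section Degree
variable {R σ τ : Type*} [CommSemiring R]

theorem MvPolynomial.totalDegree_aeval_le_of_totalDegree_le_one {s : σ → MvPolynomial τ R}
    (hs : ∀ i, (s i).totalDegree ≤ 1) (p : MvPolynomial σ R) :
    (aeval s p).totalDegree ≤ p.totalDegree := by
  conv_lhs => rw [p.as_sum, map_sum]
  refine totalDegree_finsetSum_le fun u hu => le_trans ?_ (le_totalDegree hu)
  rw [aeval_monomial, Finsupp.prod]
  refine (totalDegree_mul _ _).trans ?_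
  rw [algebraMap_eq, totalDegree_C, zero_add]
  refine (totalDegree_finsetProd _ _).trans (Finset.sum_le_sum fun i _ => ?_)
  exact (totalDegree_pow _ _).trans (by simpa using Nat.mul_le_mul_left (u i) (hs i))

theorem MvPolynomial.totalDegree_polynomial_aeval_le (x : MvPolynomial σ R) (P : Polynomial R) :
    (Polynomial.aeval x P).totalDegree ≤ P.natDegree * x.totalDegree := by
  rw [Polynomial.aeval_eq_sum_range]
  refine totalDegree_finsetSum_le fun i hi => ?_
  refine (totalDegree_smul_le _ _).trans ((totalDegree_pow _ _).trans ?_)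
  exact Nat.mul_le_mul_right _ (Nat.lt_succ_iff.mp (Finset.mem_range.mp hi))

theorem MvPolynomial.coeff_aeval_C_mul_X (b : R) (p : MvPolynomial σ R) (m : σ →₀ ℕ) :
    coeff m (aeval (fun i => C b * X i) p) = b ^ m.degree * coeff m p := by
  classical
  induction p using MvPolynomial.induction_on' with
  | add p q hp hq => simp only [map_add, coeff_add, hp, hq, mul_add]
  | monomial u c =>
    have : aeval (fun i => C b * X i) (monomial u c) = monomial u (b ^ u.degree * c) := by
      rw [aeval_monomial, monomial_eq, Finsupp.prod, Finsupp.prod]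
      simp only [mul_pow, Finset.prod_mul_distrib, ← C_pow, ← map_prod,
        Finset.prod_pow_eq_pow_sum, algebraMap_eq, C_mul, Finsupp.degree_apply]
      ring
    rw [this, coeff_monomial, coeff_monomial]
    split_ifs with h
    · rw [h]
    · rw [mul_zero]

theorem MvPolynomial.coeff_mul_pow_eq_zero {w : MvPolynomial σ R} (hw : constantCoeff w = 0)
    (p : MvPolynomial σ R) {k : ℕ} {m : σ →₀ ℕ} (hm : m.degree < k) :
    coeff m (p * w ^ k) = 0 := by
  have hw' : w ∈ idealOfVars σ R := by
    rw [← pow_one (idealOfVars σ R), mem_pow_idealOfVars_iff']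
    intro x hx
    rw [Nat.lt_one_iff, Finsupp.degree_eq_zero_iff] at hx
    rwa [hx]
  exact (mem_pow_idealOfVars_iff' k _).mp (Ideal.mul_mem_left _ p (Ideal.pow_mem_pow hw' k)) m hm

end Degree

section Shift
variable {R σ : Type*} [CommRing R] (α : σ → R)

theorem MvPolynomial.aeval_X_sub_C_aeval_X_add_C (p : MvPolynomial σ R) :
    aeval (fun i => X i - C (α i)) (aeval (fun i => X i + C (α i)) p) = p := by
  rw [comp_aeval_apply]
  simp [algebraMap_eq]

theorem MvPolynomial.constantCoeff_aeval_X_add_C (p : MvPolynomial σ R) :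
    constantCoeff (aeval (fun i => X i + C (α i)) p) = eval α p := by
  have h : constantCoeff.comp (aeval (fun i => X i + C (α i))).toRingHom = eval α := by
    ext <;> simp
  exact RingHom.congr_fun h p

theorem MvPolynomial.aeval_C_mul_X_add_C (b : R) (p : MvPolynomial σ R) :
    aeval (fun i => C b * X i + C (α i)) p =
      aeval (fun i => C b * X i) (aeval (fun i => X i + C (α i)) p) := by
  rw [comp_aeval_apply]
  simp [algebraMap_eq]

theorem MvPolynomial.totalDegree_aeval_X_add_C_le (p : MvPolynomial σ R) :
    (aeval (fun i => X i + C (α i)) p).totalDegree ≤ p.totalDegree :=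
  totalDegree_aeval_le_of_totalDegree_le_one (fun i => (totalDegree_add _ _).trans
    (by simpa [X] using totalDegree_monomial_le (Finsupp.single i 1) (1 : R))) p

theorem MvPolynomial.aeval_C_mul_X_add_C_mul_sum_C_mul_pow (b c : R) (f g : MvPolynomial σ R)
    {P : Polynomial R} {d : ℕ} (hP : P.natDegree ≤ d) :
    aeval (fun i => C b * X i + C (α i)) f *
        ∑ i ∈ Finset.range (d + 1),
          C (c * P.coeff i) * aeval (fun j => C b * X j + C (α j)) g ^ i =
      c • aeval (fun j => C b * X j) (aeval (fun i => X i + C (α i)) f *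
        Polynomial.aeval (aeval (fun i => X i + C (α i)) g) P) := by
  have hsum (y : MvPolynomial σ R) :
      ∑ i ∈ Finset.range (d + 1), C (c * P.coeff i) * y ^ i = C c * Polynomial.aeval y P := by
    rw [Polynomial.aeval_eq_sum_range' (Nat.lt_succ_of_le hP), Finset.mul_sum]
    exact Finset.sum_congr rfl fun i _ => by rw [smul_eq_C_mul, C_mul, mul_assoc]
  rw [hsum, aeval_C_mul_X_add_C, aeval_C_mul_X_add_C, Polynomial.aeval_algHom_apply, map_mul,
    smul_eq_C_mul]
  ring

end Shift

section Lagrange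
variable {K ι : Type*} [Field K] [DecidableEq ι]

/-- Applied to the values `p (v i • z)`, these weights recover the part of degree `≤ d` of a
polynomial `p` of degree `< #s`. -/
noncomputable def truncWeight (s : Finset ι) (v : ι → K) (d : ℕ) (i : ι) : K :=
  ∑ j ∈ Finset.range (d + 1), (Lagrange.basis s v i).coeff j

theorem sum_truncWeight_mul_pow {s : Finset ι} {v : ι → K} (hv : Set.InjOn v s) (d : ℕ)
    {k : ℕ} (hk : k < s.card) :
    ∑ i ∈ s, truncWeight s v d i * v i ^ k = if k ≤ d then 1 else 0 := by
  have hX := Lagrange.eq_interpolate (f := Polynomial.X ^ k) hv (by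
    rw [Polynomial.degree_X_pow]
    exact_mod_cast hk)
  have hsum := congrArg (fun P : Polynomial K => ∑ j ∈ Finset.range (d + 1), P.coeff j) hX
  simp only [Lagrange.interpolate_apply, Polynomial.finsetSum_coeff, Polynomial.coeff_C_mul,
    Polynomial.eval_pow, Polynomial.eval_X, Polynomial.coeff_X_pow, Finset.sum_ite_eq',
    Finset.mem_range, Nat.lt_succ_iff] at hsum
  rw [hsum, Finset.sum_comm]
  simp only [truncWeight, Finset.mul_sum, mul_comm]

end Lagrange

namespace Polynomial
variable {K : Type*} [Field K]

/-- The Taylor polynomial of degree `d` of `1 / x` at `γ`. -/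
noncomputable def invTaylor (γ : K) (d : ℕ) : K[X] :=
  ∑ i ∈ Finset.range (d + 1), C γ⁻¹ * (1 - C γ⁻¹ * X) ^ i

theorem natDegree_invTaylor_le (γ : K) (d : ℕ) : (invTaylor γ d).natDegree ≤ d := by
  refine natDegree_sum_le_of_forall_le _ _ fun i hi => ?_
  have hi : i ≤ d := Nat.lt_succ_iff.mp (Finset.mem_range.mp hi)
  have hlin : (1 - C γ⁻¹ * X).natDegree ≤ 1 := by compute_degree
  exact (natDegree_C_mul_le _ _).trans ((natDegree_pow_le_of_le i hlin).trans (by simpa using hi))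

theorem mul_aeval_invTaylor {A : Type*} [CommRing A] [Algebra K A] (γ : K) (d : ℕ) (x : A) :
    x * aeval x (invTaylor γ d) = 1 - (1 - algebraMap K A γ⁻¹ * x) ^ (d + 1) := by
  have hx : x * algebraMap K A γ⁻¹ = 1 - (1 - algebraMap K A γ⁻¹ * x) := by ring
  simp only [invTaylor, map_sum, map_mul, map_pow, map_sub, map_one, aeval_C, aeval_X,
    ← mul_assoc, hx, ← Finset.mul_sum, mul_neg_geom_sum]

end Polynomial

section Extraction
variable {K ι σ : Type*} [Field K] [DecidableEq ι] {s : Finset ι} {v : ι → K}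

theorem coeff_sum_truncWeight_smul_aeval_C_mul_X (hv : Set.InjOn v s) (d : ℕ)
    {p : MvPolynomial σ K} (hp : p.totalDegree < s.card) (m : σ →₀ ℕ) :
    coeff m (∑ i ∈ s, truncWeight s v d i • aeval (fun j => C (v i) * X j) p) =
      if m.degree ≤ d then coeff m p else 0 := by
  simp only [coeff_sum, coeff_smul, coeff_aeval_C_mul_X, smul_eq_mul, ← mul_assoc,
    ← Finset.sum_mul]
  by_cases hm : m.degree < s.card
  · rw [sum_truncWeight_mul_pow hv d hm, ite_mul, one_mul, zero_mul]
  · have hp0 : coeff m p = 0 := coeff_eq_zero_of_totalDegree_lt (by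
      rw [← Finsupp.degree_apply]; omega)
    simp [hp0]

theorem sum_truncWeight_smul_aeval_C_mul_X_eq (hv : Set.InjOn v s) {d : ℕ}
    {p q : MvPolynomial σ K} (hp : p.totalDegree < s.card) (hq : q.totalDegree ≤ d)
    (hpq : ∀ m : σ →₀ ℕ, m.degree ≤ d → coeff m p = coeff m q) :
    ∑ i ∈ s, truncWeight s v d i • aeval (fun j => C (v i) * X j) p = q := by
  ext m
  rw [coeff_sum_truncWeight_smul_aeval_C_mul_X hv d hp]
  split_ifs with hm
  · exact hpq m hm
  · exact (coeff_eq_zero_of_totalDegree_lt (by rw [← Finsupp.degree_apply]; omega)).symm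

end Extraction

section DivisibilityTest
variable {K σ : Type*} [Field K]

noncomputable def dvdTestCoeff (d : ℕ) (γ : K) (β i : ℕ) : K :=
  truncWeight (Finset.Icc 1 (2 * d ^ 2 + 1)) (Nat.cast : ℕ → K) d β *
    (Polynomial.invTaylor γ d).coeff i

theorem aeval_X_add_C_eq_mul_sum_of_dvd [CharZero K] {d : ℕ} {f g : MvPolynomial σ K}
    (hf : f.totalDegree ≤ d) (hg : g.totalDegree ≤ d) {α : σ → K} (hα : eval α g ≠ 0)
    (hdvd : g ∣ f) :
    aeval (fun i => X i + C (α i)) f = aeval (fun i => X i + C (α i)) g *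
      ∑ β ∈ Finset.Icc (1 : ℕ) (2 * d ^ 2 + 1), aeval (fun i => C (β : K) * X i + C (α i)) f *
        ∑ i ∈ Finset.range (d + 1), C (dvdTestCoeff d (eval α g) β i) *
          (aeval (fun j => C (β : K) * X j + C (α j)) g) ^ i := by
  obtain ⟨q, rfl⟩ := hdvd
  set τ : MvPolynomial σ K →ₐ[K] MvPolynomial σ K := aeval fun i => X i + C (α i)
  set P := Polynomial.invTaylor (eval α g) d
  set w := 1 - C (eval α g)⁻¹ * τ g
  have hq : q.totalDegree ≤ d := by
    rcases eq_or_ne q 0 with rfl | hq0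
    · simp
    have hg0 : g ≠ 0 := by rintro rfl; simp at hα
    exact (totalDegree_le_of_dvd_of_isDomain (dvd_mul_left q g) (mul_ne_zero hg0 hq0)).trans hf
  have hw : constantCoeff w = 0 := by
    rw [map_sub, map_one, map_mul, constantCoeff_C, constantCoeff_aeval_X_add_C,
      inv_mul_cancel₀ hα, sub_self]
  -- `τ g · P(τ g) = 1 - w ^ (d + 1)`, so `H` agrees with `τ q` up to degree `d`.
  set H := τ (g * q) * Polynomial.aeval (τ g) P with hHdef
  have hH : H = τ q - τ q * w ^ (d + 1) := by
    rw [hHdef, map_mul, mul_comm (τ g), mul_assoc, Polynomial.mul_aeval_invTaylor, algebraMap_eq]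
    ring
  have hHdeg : H.totalDegree < (Finset.Icc 1 (2 * d ^ 2 + 1)).card := by
    have hle : H.totalDegree ≤ d + d * d := (totalDegree_mul _ _).trans (add_le_add
      ((totalDegree_aeval_X_add_C_le α (g * q)).trans hf)
      ((totalDegree_polynomial_aeval_le (τ g) P).trans (Nat.mul_le_mul
        (Polynomial.natDegree_invTaylor_le _ d) ((totalDegree_aeval_X_add_C_le α g).trans hg))))
    rw [Nat.card_Icc, Nat.add_sub_cancel]
    nlinarith [Nat.le_mul_self d]
  simp only [dvdTestCoeff]
  rw [Finset.sum_congr rfl fun β _ => aeval_C_mul_X_add_C_mul_sum_C_mul_pow α _ _ _ _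
    (Polynomial.natDegree_invTaylor_le _ d), sum_truncWeight_smul_aeval_C_mul_X_eq
    (Nat.cast_injective.injOn) hHdeg ((totalDegree_aeval_X_add_C_le α q).trans hq), map_mul]
  intro m hm
  rw [hH, coeff_sub, coeff_mul_pow_eq_zero hw _ (Nat.lt_succ_of_le hm), sub_zero]

end DivisibilityTest

/-- (Forbes' divisibility-to-PIT reduction.) For `f, g ∈ ℚ[z₁,…,zₙ]` of
total degree at most `d`, `S = {1,…,2d²+1}` and `α ∈ ℚⁿ` with `g(α) ≠ 0`, there are
constants `c_{β,i} ∈ ℚ` (`β ∈ S`, `0 ≤ i ≤ d`) such that with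
`h̃ = Σ_{β ∈ S} f(βz+α) Σ_{i=0}^d c_{β,i} g(βz+α)^i` one has
`g ∣ f ↔ f(z+α) = g(z+α)·h̃`. -/
theorem stmt6 (n d : ℕ) (f g : MvPolynomial (Fin n) ℚ)
    (hf : f.totalDegree ≤ d) (hg : g.totalDegree ≤ d)
    (α : Fin n → ℚ) (hα : MvPolynomial.eval α g ≠ 0) :
    ∃ c : ℕ → ℕ → ℚ,
      (g ∣ f ↔
        MvPolynomial.aeval (fun i => MvPolynomial.X i + MvPolynomial.C (α i)) f =
          MvPolynomial.aeval (fun i => MvPolynomial.X i + MvPolynomial.C (α i)) g *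
            ∑ β ∈ Finset.Icc (1 : ℕ) (2 * d ^ 2 + 1),
              MvPolynomial.aeval
                  (fun i => MvPolynomial.C (β : ℚ) * MvPolynomial.X i + MvPolynomial.C (α i)) f *
                ∑ i ∈ Finset.range (d + 1),
                  MvPolynomial.C (c β i) *
                    (MvPolynomial.aeval
                      (fun j => MvPolynomial.C (β : ℚ) * MvPolynomial.X j +
                        MvPolynomial.C (α j)) g) ^ i) := by
  by_cases hdvd : g ∣ f
  · exact ⟨dvdTestCoeff d (eval α g),
      iff_of_true hdvd (aeval_X_add_C_eq_mul_sum_of_dvd hf hg hα hdvd)⟩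
  · refine ⟨0, iff_of_false hdvd fun h => hdvd ?_⟩
    simp only [Pi.zero_apply, C_0, zero_mul, Finset.sum_const_zero, mul_zero] at h
    rw [← aeval_X_sub_C_aeval_X_add_C α f, h, map_zero]
    exact dvd_zero g
end

section
/- Let n ≥ 1 and δ ≥ 1 be integers. There exists a prime number p with p ≤ ((δ+1)³·n^{2δ+1})² such that the map sending an exponent vector e = (e₁,…,eₙ) ∈ ℕⁿ to the integer Σ_{i=1}^{n} eᵢ·wᵢ, where wᵢ = (δ+1)^{i-1} mod p, is injective on the set {e ∈ ℕⁿ : e₁+⋯+eₙ ≤ δ}. -/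
/-!
Read an exponent vector `e` with `‖e‖₁ ≤ δ` as the base-`(δ + 1)` numeral
`N e = ∑ eᵢ (δ + 1)^(i-1) < (δ + 1)^n ≤ 2^(δ n)`; this is injective. As `|M_δ| ≤ (δ + 1) n^δ`,
the product `D` of the positive differences `N f - N e` is at most `2^m` with
`m = (δ + 1)³ n^(2δ+1)`, so `D` has at most `m` prime factors. From
`2^x ≤ (x + 1) lcm(1, …, x) ≤ (x + 1) x^π(x)` there are more than `m` primes up to `m²`, so some
such prime `p` does not divide `D`: then `N` stays injective modulo `p`, and the weighted sum of
the statement is `N e` modulo `p`.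
-/

open Finset

namespace Nat

theorem lcmUpto_le_pow_primeCounting (n : ℕ) : lcmUpto n ≤ n ^ primeCounting n := by
  rw [lcmUpto_eq_prod_pow_log, ← primesLE_card_eq_primeCounting]
  refine prod_le_pow_card _ _ _ fun p hp => pow_log_le_self p ?_
  exact ((prime_of_mem_primesLE hp).pos.trans_le (le_of_mem_primesLE hp)).ne'

theorem two_pow_le_mul_pow_primeCounting (n : ℕ) : 2 ^ n ≤ (n + 1) * n ^ primeCounting n :=
  (Chebyshev.two_pow_le_mul_lcmUpto n).trans
    (Nat.mul_le_mul_left _ (lcmUpto_le_pow_primeCounting n))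

theorem sq_add_one_le_two_pow {j : ℕ} (hj : 6 ≤ j) : (j + 1) ^ 2 + 1 ≤ 2 ^ j := by
  induction j, hj using Nat.le_induction with
  | base => norm_num
  | succ j _ ih => rw [pow_succ 2 j]; nlinarith

theorem lt_primeCounting_sq {m : ℕ} (hm : 8 ≤ m) : m < primeCounting (m ^ 2) := by
  by_contra! h
  obtain ⟨j, rfl⟩ : ∃ j, m = j + 1 := ⟨m - 1, by omega⟩
  have hj := sq_add_one_le_two_pow (j := j) (by omega)
  have : 2 ^ (j + 1) ^ 2 ≤ 2 ^ (j * (j + 2)) := calc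
    2 ^ (j + 1) ^ 2 ≤ ((j + 1) ^ 2 + 1) * ((j + 1) ^ 2) ^ primeCounting ((j + 1) ^ 2) :=
      two_pow_le_mul_pow_primeCounting _
    _ ≤ 2 ^ j * (2 ^ j) ^ (j + 1) := Nat.mul_le_mul hj <|
      (Nat.pow_le_pow_right (by positivity) h).trans (Nat.pow_le_pow_left (by omega) _)
    _ = 2 ^ (j * (j + 2)) := by ring
  have := (Nat.pow_le_pow_iff_right (by norm_num)).mp this
  nlinarith

theorem card_primeFactors_le_of_le_two_pow {D m : ℕ} (hD : D ≠ 0) (hDm : D ≤ 2 ^ m) :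
    #D.primeFactors ≤ m := by
  have : 2 ^ #D.primeFactors ≤ 2 ^ m := calc
    2 ^ #D.primeFactors ≤ ∏ p ∈ D.primeFactors, p :=
      pow_card_le_prod _ _ _ fun p hp => (prime_of_mem_primeFactors hp).two_le
    _ ≤ D := le_of_dvd (pos_of_ne_zero hD) (prod_primeFactors_dvd D)
    _ ≤ 2 ^ m := hDm
  exact (Nat.pow_le_pow_iff_right (by norm_num)).mp this

theorem exists_prime_le_sq_not_dvd {D m : ℕ} (hm : 8 ≤ m) (hD : D ≠ 0) (hDm : D ≤ 2 ^ m) :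
    ∃ p, p.Prime ∧ p ≤ m ^ 2 ∧ ¬p ∣ D := by
  by_contra! h
  have hsub : primesLE (m ^ 2) ⊆ D.primeFactors := fun p hp => by
    rw [mem_primesLE] at hp
    exact mem_primeFactors.2 ⟨hp.2, h p hp.2 hp.1, hD⟩
  have := card_le_card hsub
  rw [primesLE_card_eq_primeCounting] at this
  have := lt_primeCounting_sq hm
  have := card_primeFactors_le_of_le_two_pow hD hDm
  omega

end Nat

theorem exists_prime_le_sq_injOn_mod {A : Finset ℕ} {k m : ℕ} (hm : 8 ≤ m)
    (hA : ∀ a ∈ A, a < 2 ^ k) (hkm : k * #A ^ 2 ≤ m) :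
    ∃ p, p.Prime ∧ p ≤ m ^ 2 ∧ Set.InjOn (· % p) A := by
  set pairs := (A ×ˢ A).filter fun x => x.1 < x.2
  set D := ∏ x ∈ pairs, (x.2 - x.1)
  have hD : D ≠ 0 := prod_ne_zero_iff.2 fun x hx => by
    simp only [pairs, mem_filter] at hx
    omega
  have hDm : D ≤ 2 ^ m := calc
    D ≤ (2 ^ k) ^ #pairs := prod_le_pow_card _ _ _ fun x hx => by
      simp only [pairs, mem_filter, mem_product] at hx
      have := hA _ hx.1.2
      omega
    _ ≤ (2 ^ k) ^ (#A ^ 2) :=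
      Nat.pow_le_pow_right (by positivity) <|
        (card_filter_le _ _).trans_eq (by rw [card_product, sq])
    _ ≤ 2 ^ m := by
      rw [← pow_mul]
      exact Nat.pow_le_pow_right (by norm_num) hkm
  obtain ⟨p, hp, hpm, hpD⟩ := Nat.exists_prime_le_sq_not_dvd hm hD hDm
  have hne : ∀ a ∈ A, ∀ b ∈ A, a < b → a % p ≠ b % p := fun a ha b hb hab hmod =>
    hpD <| (Nat.dvd_of_mod_eq_zero (Nat.sub_mod_eq_zero_of_mod_eq hmod.symm)).trans <|
      dvd_prod_of_mem (fun x : ℕ × ℕ => x.2 - x.1) (a := (a, b)) (by simp [pairs, ha, hb, hab])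
  refine ⟨p, hp, hpm, fun a ha b hb hab => ?_⟩
  by_contra hab'
  rcases Nat.lt_or_gt_of_ne hab' with h | h
  exacts [hne a ha b hb h hab, hne b hb a ha h hab.symm]

theorem sum_mul_pow_lt_pow {b n : ℕ} {e : Fin n → ℕ} (he : ∀ i, e i < b) :
    ∑ i, e i * b ^ (i : ℕ) < b ^ n :=
  finFunctionFinEquiv_apply (fun i => ⟨e i, he i⟩) ▸ (finFunctionFinEquiv _).isLt

theorem sum_mul_pow_lt_two_pow {b n : ℕ} {e : Fin n → ℕ} (he : ∀ i, e i < b + 1) :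
    ∑ i, e i * (b + 1) ^ (i : ℕ) < 2 ^ (b * n) :=
  (sum_mul_pow_lt_pow he).trans_le <| pow_mul 2 b n ▸ Nat.pow_le_pow_left Nat.lt_two_pow_self n

theorem injOn_sum_mul_pow (b n : ℕ) :
    Set.InjOn (fun e : Fin n → ℕ => ∑ i, e i * b ^ (i : ℕ)) {e | ∀ i, e i < b} := by
  intro e he f hf hef
  have := finFunctionFinEquiv.injective (Fin.ext <|
    (finFunctionFinEquiv_apply (fun i => ⟨e i, he i⟩)).trans <| hef.trans
      (finFunctionFinEquiv_apply (fun i => ⟨f i, hf i⟩)).symm)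
  funext i
  exact congrArg Fin.val (congrFun this i)

theorem sum_mul_mod_modEq {ι : Type*} (s : Finset ι) (e w : ι → ℕ) (p : ℕ) :
    ∑ i ∈ s, e i * (w i % p) ≡ ∑ i ∈ s, e i * w i [MOD p] :=
  Nat.ModEq.sum fun i _ => (Nat.mod_modEq (w i) p).mul_left (e i)

theorem card_antidiagonalTuple_le_pow (n k : ℕ) :
    #(Finset.Nat.antidiagonalTuple n k) ≤ n ^ k := by
  have e : Finset.Nat.antidiagonalTuple n k ≃ Sym (Fin n) k :=
    (Equiv.subtypeEquivRight fun _ => Finset.Nat.mem_antidiagonalTuple).trans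
      (Sym.equivNatSumOfFintype (Fin n) k).symm
  rw [card_eq_of_equiv_fintype e]
  calc Fintype.card (Sym (Fin n) k) ≤ Fintype.card (List.Vector (Fin n) k) :=
        Fintype.card_le_of_surjective Sym.ofVector fun s =>
          ⟨⟨s.1.toList, by simp⟩, Subtype.ext (Multiset.coe_toList s.1)⟩
    _ = n ^ k := by simp [card_vector]

def monomialExponents (n δ : ℕ) : Finset (Fin n → ℕ) :=
  (range (δ + 1)).biUnion (Finset.Nat.antidiagonalTuple n)

theorem mem_monomialExponents {n δ : ℕ} {e : Fin n → ℕ} :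
    e ∈ monomialExponents n δ ↔ ∑ i, e i ≤ δ := by
  simp [monomialExponents, Finset.Nat.mem_antidiagonalTuple]

theorem coe_monomialExponents (n δ : ℕ) :
    (monomialExponents n δ : Set (Fin n → ℕ)) = {e | ∑ i, e i ≤ δ} :=
  Set.ext fun _ => mem_monomialExponents

theorem lt_of_mem_monomialExponents {n δ : ℕ} {e : Fin n → ℕ} (he : e ∈ monomialExponents n δ)
    (i : Fin n) : e i < δ + 1 :=
  Nat.lt_succ_of_le <| (single_le_sum (fun j _ => Nat.zero_le (e j)) (mem_univ i)).trans
    (mem_monomialExponents.1 he)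

theorem card_monomialExponents_le {n : ℕ} (hn : 1 ≤ n) (δ : ℕ) :
    #(monomialExponents n δ) ≤ (δ + 1) * n ^ δ := calc
  #(monomialExponents n δ) ≤ ∑ k ∈ range (δ + 1), n ^ k :=
    card_biUnion_le.trans (sum_le_sum fun k _ => card_antidiagonalTuple_le_pow n k)
  _ ≤ ∑ _k ∈ range (δ + 1), n ^ δ :=
    sum_le_sum fun k hk => Nat.pow_le_pow_right hn (Nat.lt_succ_iff.1 (mem_range.1 hk))
  _ = (δ + 1) * n ^ δ := by simp

/-- For `n ≥ 1`, `δ ≥ 1`, there is a prime `p ≤ ((δ+1)³·n^(2δ+1))²` such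
that the map `e ↦ Σᵢ eᵢ·wᵢ`, with weights `wᵢ = (δ+1)^(i-1) mod p`, is injective on
the set of exponent vectors of total degree at most `δ`. -/
theorem stmt7 (n δ : ℕ) (hn : 1 ≤ n) (hδ : 1 ≤ δ) :
    ∃ p : ℕ, p.Prime ∧ p ≤ ((δ + 1) ^ 3 * n ^ (2 * δ + 1)) ^ 2 ∧
      Set.InjOn (fun e : Fin n → ℕ => ∑ i, e i * ((δ + 1) ^ (i : ℕ) % p))
        {e : Fin n → ℕ | ∑ i, e i ≤ δ} := by
  set N := fun e : Fin n → ℕ => ∑ i, e i * (δ + 1) ^ (i : ℕ)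
  set A := (monomialExponents n δ).image N
  have hA : ∀ a ∈ A, a < 2 ^ (δ * n) := by
    simp only [A, mem_image, forall_exists_index, and_imp, forall_apply_eq_imp_iff₂]
    exact fun e he => sum_mul_pow_lt_two_pow (lt_of_mem_monomialExponents he)
  have hAm : δ * n * #A ^ 2 ≤ (δ + 1) ^ 3 * n ^ (2 * δ + 1) := calc
    δ * n * #A ^ 2 ≤ (δ + 1) * n * ((δ + 1) * n ^ δ) ^ 2 := by
      gcongr
      · omega
      · exact card_image_le.trans (card_monomialExponents_le hn δ)
    _ = (δ + 1) ^ 3 * n ^ (2 * δ + 1) := by ring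
  have hm : 8 ≤ (δ + 1) ^ 3 * n ^ (2 * δ + 1) := calc
    8 = 2 ^ 3 * 1 ^ (2 * δ + 1) := by norm_num
    _ ≤ (δ + 1) ^ 3 * n ^ (2 * δ + 1) := by gcongr; omega
  obtain ⟨p, hp, hpm, hinj⟩ := exists_prime_le_sq_injOn_mod hm hA hAm
  have hN : Set.InjOn N (monomialExponents n δ) :=
    (injOn_sum_mul_pow (δ + 1) n).mono fun _ => lt_of_mem_monomialExponents
  refine ⟨p, hp, hpm, coe_monomialExponents n δ ▸ Set.InjOn.of_comp (g := (· % p)) ?_⟩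
  exact (hinj.comp hN fun e he => mem_image_of_mem N he).congr fun e _ =>
    (sum_mul_mod_modEq _ _ _ p).symm
end

section
/- Let p ∈ ℚ[z₁,…,zₙ] be a polynomial of the form p = p₁(z₁) + p₂(z₂) + ⋯ + pₙ(zₙ), where each pᵢ is a univariate polynomial in the single variable zᵢ. If p depends on at least 3 variables (that is, ∂p/∂zᵢ ≠ 0 for at least three indices i), then p is irreducible in ℚ[z₁,…,zₙ]. -/
/-!
Let `dᵢ = deg pᵢ`, let `T` be the set of variables `p` depends on, and give `zᵢ` the weight
`wᵢ = M / dᵢ` with `M = ∏_{i ∈ T} dᵢ`. Substituting `zᵢ ↦ zᵢ tʷⁱ` turns `p` into a polynomial in `t`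
whose leading coefficient is the diagonal form `h = ∑_{i ∈ T} aᵢ zᵢ^dᵢ` (`aᵢ` the leading
coefficient of `pᵢ`). Leading coefficients are multiplicative, and a factor whose leading
coefficient is constant is itself constant, so irreducibility of `h` implies that of `p`.

Single out `i₀ ∈ T` and read `h` as `a z_{i₀}^{d_{i₀}} + g` over `ℚ[zᵢ : i ≠ i₀]`. A square factor
of `g` would divide every `∂g/∂zᵢ = aᵢ dᵢ zᵢ^(dᵢ-1)`, hence two coprime monomials once `|T| ≥ 3`;
so `g` is squarefree, and Eisenstein's criterion at any prime factor of `g` shows that `h` is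
irreducible.
-/

open scoped Polynomial

theorem Polynomial.irreducible_C_mul_X_pow_add_C_of_squarefree {R : Type*} [CommRing R]
    [IsDomain R] [UniqueFactorizationMonoid R] {a b : R} (ha : IsUnit a) (hb : Squarefree b)
    (hb' : ¬IsUnit b) {d : ℕ} (hd : 0 < d) : Irreducible (C a * X ^ d + C b) := by
  obtain ⟨π, hπ, hπb⟩ := WfDvdMonoid.exists_irreducible_factor hb' hb.ne_zero
  have hcoeff (n : ℕ) :
      (C a * X ^ d + C b).coeff n = (if n = d then a else 0) + if n = 0 then b else 0 := by
    simp [coeff_C, coeff_X_pow]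
  have hdeg : (C a * X ^ d + C b).natDegree = d := by
    apply natDegree_eq_of_le_of_coeff_ne_zero
    · exact (natDegree_add_le _ _).trans (by simp [natDegree_C_mul_X_pow_le])
    · simpa [hcoeff, hd.ne'] using ha.ne_zero
  have hlc : (C a * X ^ d + C b).leadingCoeff = a := by
    simp [leadingCoeff, hdeg, hcoeff, hd.ne']
  refine IsEisensteinAt.irreducible (𝓟 := Ideal.span {π}) ⟨?_, ?_, ?_⟩
    ((Ideal.span_singleton_prime hπ.ne_zero).mpr hπ.prime) ?_ (by omega)
  · rw [hlc, Ideal.mem_span_singleton]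
    exact fun h => hπ.not_isUnit (isUnit_of_dvd_unit h ha)
  · intro n hn
    rw [hdeg] at hn
    rw [hcoeff, if_neg hn.ne, zero_add, Ideal.mem_span_singleton]
    split_ifs <;> simp [hπb]
  · rw [hcoeff, if_neg hd.ne, zero_add, if_pos rfl, Ideal.span_singleton_pow,
      Ideal.mem_span_singleton, sq]
    exact fun h => hπ.not_isUnit (hb π h)
  · refine isPrimitive_iff_isUnit_of_C_dvd.mpr fun r hr => isUnit_of_dvd_unit ?_ ha
    simpa [hcoeff, hd.ne'] using (C_dvd_iff_dvd_coeff r _).mp hr d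

namespace MvPolynomial

variable {σ R K : Type*} [CommRing R]

section DiagonalForm

theorem pderiv_sum_C_mul_X_pow [DecidableEq σ] {S : Finset σ} (a : σ → R) (d : σ → ℕ) {j : σ}
    (hj : j ∈ S) :
    pderiv j (∑ i ∈ S, C (a i) * X i ^ d i) = C (a j * d j) * X j ^ (d j - 1) := by
  rw [map_sum, Finset.sum_eq_single_of_mem j hj]
  · simp only [pderiv_C_mul, pderiv_pow, pderiv_X_self, map_mul, map_natCast]
    ring
  · intro i _ hij
    simp [pderiv_X, hij]

theorem pderiv_sum_C_mul_X_pow_ne_zero [IsDomain R] [CharZero R] {S : Finset σ} {a : σ → R}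
    {d : σ → ℕ} {j : σ} (hj : j ∈ S) (ha : a j ≠ 0) (hd : 0 < d j) :
    pderiv j (∑ i ∈ S, C (a i) * X i ^ d i) ≠ 0 := by
  classical
  rw [pderiv_sum_C_mul_X_pow a d hj]
  exact mul_ne_zero (by simp [ha, hd.ne']) (pow_ne_zero _ (X_ne_zero j))

theorem not_isUnit_sum_C_mul_X_pow [IsDomain R] [CharZero R] {S : Finset σ} (hS : S.Nonempty)
    {a : σ → R} {d : σ → ℕ} (ha : ∀ i ∈ S, a i ≠ 0) (hd : ∀ i ∈ S, 0 < d i) :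
    ¬IsUnit (∑ i ∈ S, C (a i) * X i ^ d i) := by
  obtain ⟨j, hj⟩ := hS
  rw [isUnit_iff_eq_C_of_isReduced]
  rintro ⟨r, -, hr⟩
  exact pderiv_sum_C_mul_X_pow_ne_zero hj (ha j hj) (hd j hj) (by rw [hr, pderiv_C])

variable [Field K] [CharZero K]

theorem squarefree_sum_C_mul_X_pow {S : Finset σ} (hS : 1 < S.card) {a : σ → K} {d : σ → ℕ}
    (ha : ∀ i ∈ S, a i ≠ 0) (hd : ∀ i ∈ S, 0 < d i) :
    Squarefree (∑ i ∈ S, C (a i) * X i ^ d i) := by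
  classical
  rintro x ⟨y, hy⟩
  have hdvd {j : σ} (hj : j ∈ S) : x ∣ X j ^ (d j - 1) := by
    have hx : x ∣ pderiv j (x * x * y) := by
      rw [pderiv_mul, pderiv_mul]
      exact dvd_add (dvd_mul_of_dvd_left (dvd_add (dvd_mul_left x _) (dvd_mul_right x _)) _)
        (dvd_mul_of_dvd_left (dvd_mul_right x x) _)
    rwa [← hy, pderiv_sum_C_mul_X_pow a d hj, IsUnit.dvd_mul_left] at hx
    exact (isUnit_iff_ne_zero.mpr (by simp [ha j hj, (hd j hj).ne'])).map C
  obtain ⟨j, hj, k, hk, hjk⟩ := Finset.one_lt_card.mp hS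
  have hrel : IsRelPrime (X j ^ (d j - 1)) (X k ^ (d k - 1) : MvPolynomial σ K) :=
    ((X_prime.irreducible.isRelPrime_iff_not_dvd).mpr (by simpa using hjk)).pow
  exact hrel (hdvd hj) (hdvd hk)

theorem irreducible_sum_C_mul_X_pow {T : Finset σ} (hT : 2 < T.card) {a : σ → K} {d : σ → ℕ}
    (ha : ∀ i ∈ T, a i ≠ 0) (hd : ∀ i ∈ T, 0 < d i) :
    Irreducible (∑ i ∈ T, C (a i) * X i ^ d i) := by
  classical
  obtain ⟨i₀, hi₀⟩ := Finset.card_pos.mp (by omega : 0 < T.card)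
  set S := T.subtype (· ≠ i₀)
  let Ψ := (renameEquiv K (Equiv.optionSubtypeNe i₀).symm).trans (optionEquivLeft K {t // t ≠ i₀})
  have hΨ : Ψ (∑ i ∈ T, C (a i) * X i ^ d i) = Polynomial.C (C (a i₀)) * Polynomial.X ^ d i₀ +
      Polynomial.C (∑ j ∈ S, C (a j) * X j ^ d j) := by
    rw [← Finset.add_sum_erase T _ hi₀, ← Finset.filter_ne', ← Finset.sum_subtype_eq_sum_filter]
    have hsome (j : {t // t ≠ i₀}) : (Equiv.optionSubtypeNe i₀).symm j = some j :=
      Equiv.optionSubtypeNe_symm_of_ne j.2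
    simp [Ψ, hsome]
    rfl
  have hS : 1 < S.card := by
    rw [Finset.card_subtype, Finset.filter_ne', Finset.card_erase_of_mem hi₀]
    omega
  have hSa : ∀ j ∈ S, a j ≠ 0 := fun j hj => ha j (Finset.mem_subtype.mp hj)
  have hSd : ∀ j ∈ S, 0 < d j := fun j hj => hd j (Finset.mem_subtype.mp hj)
  rw [← MulEquiv.irreducible_iff Ψ, hΨ]
  exact Polynomial.irreducible_C_mul_X_pow_add_C_of_squarefree
    ((isUnit_iff_ne_zero.mpr (ha i₀ hi₀)).map C) (squarefree_sum_C_mul_X_pow hS hSa hSd)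
    (not_isUnit_sum_C_mul_X_pow (Finset.card_pos.mp (by omega)) hSa hSd) (hd i₀ hi₀)

end DiagonalForm

section SumOfUnivariates

theorem polynomial_aeval_X_injective (i : σ) :
    Function.Injective (Polynomial.aeval (R := R) (X i : MvPolynomial σ R)) := by
  classical
  refine Function.LeftInverse.injective (g := aeval (Pi.single i Polynomial.X)) fun g => ?_
  rw [← Polynomial.aeval_algHom_apply]
  simp

theorem pderiv_sum_aeval_X [Fintype σ] [DecidableEq σ] (g : σ → R[X]) (i : σ) :
    pderiv i (∑ j, Polynomial.aeval (X j : MvPolynomial σ R) (g j)) =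
      Polynomial.aeval (X i) (g i).derivative := by
  simp [map_sum, Derivation.map_aeval, pderiv_X, Pi.single_apply]

theorem pderiv_sum_aeval_X_ne_zero_iff [Fintype σ] [DecidableEq σ] [IsAddTorsionFree R]
    (g : σ → R[X]) (i : σ) :
    pderiv i (∑ j, Polynomial.aeval (X j : MvPolynomial σ R) (g j)) ≠ 0 ↔
      0 < (g i).natDegree := by
  rw [pderiv_sum_aeval_X, Nat.pos_iff_ne_zero, ← Polynomial.derivative_ne_zero]
  exact map_ne_zero_iff _ (polynomial_aeval_X_injective i)

end SumOfUnivariates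

section WeightedSubst

noncomputable def weightedSubst (w : σ → ℕ) : MvPolynomial σ R →ₐ[R] (MvPolynomial σ R)[X] :=
  aeval fun i => Polynomial.C (X i) * Polynomial.X ^ w i

theorem weightedSubst_X (w : σ → ℕ) (i : σ) :
    weightedSubst w (X i : MvPolynomial σ R) = Polynomial.C (X i) * Polynomial.X ^ w i :=
  aeval_X _ i

theorem weightedSubst_monomial (w : σ → ℕ) (e : σ →₀ ℕ) (c : R) :
    weightedSubst w (monomial e c) =
      Polynomial.C (monomial e c) * Polynomial.X ^ Finsupp.weight w e := by
  induction e using Finsupp.induction with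
  | zero => simp [weightedSubst]
  | single_add i k e _ _ ih =>
    rw [monomial_single_add, map_mul, ih, map_pow, weightedSubst_X, map_add, Finsupp.weight_single,
      map_mul, smul_eq_mul, Polynomial.C_pow]
    ring

theorem coeff_weightedSubst (w : σ → ℕ) (f : MvPolynomial σ R) (m : ℕ) :
    (weightedSubst w f).coeff m = weightedHomogeneousComponent w m f := by
  classical
  induction f using MvPolynomial.induction_on' with
  | monomial e c =>
    rw [weightedSubst_monomial, Polynomial.coeff_C_mul_X_pow]
    ext e'
    rw [coeff_weightedHomogeneousComponent]
    by_cases he : e = e'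
    · subst he
      split_ifs <;> simp_all
    · split_ifs <;> simp [coeff_monomial, he]
  | add f g hf hg => simp [hf, hg]

theorem eval_one_weightedSubst (w : σ → ℕ) (f : MvPolynomial σ R) :
    (weightedSubst w f).eval 1 = f := by
  suffices ((Polynomial.aeval (1 : MvPolynomial σ R)).restrictScalars R).comp (weightedSubst w) =
      AlgHom.id R _ from congrArg (· f) this
  ext i
  simp [weightedSubst_X]

theorem weightedSubst_aeval_X (w : σ → ℕ) (i : σ) (g : R[X]) :
    weightedSubst w (Polynomial.aeval (X i : MvPolynomial σ R) g) =
      (g.map C).comp (Polynomial.C (X i) * Polynomial.X ^ w i) := by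
  rw [← Polynomial.aeval_algHom_apply, weightedSubst_X, Polynomial.comp_eq_aeval]
  exact (Polynomial.aeval_map_algebraMap (A := MvPolynomial σ R) _ g).symm

variable [IsDomain R]

theorem isUnit_of_isUnit_leadingCoeff_weightedSubst {w : σ → ℕ} {f : MvPolynomial σ R}
    (h : IsUnit (weightedSubst w f).leadingCoeff) : IsUnit f := by
  obtain ⟨r, hr, hlc⟩ := isUnit_iff_eq_C_of_isReduced.mp h
  have hdeg : (weightedSubst w f).natDegree = 0 := by
    by_contra hd
    have := congrArg (coeff 0) hlc
    rw [Polynomial.leadingCoeff, coeff_weightedSubst, coeff_weightedHomogeneousComponent, map_zero,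
      if_neg (Ne.symm hd), coeff_zero_C] at this
    exact hr.ne_zero this.symm
  rw [← eval_one_weightedSubst w f, Polynomial.eq_C_of_natDegree_eq_zero hdeg, Polynomial.eval_C]
  rwa [Polynomial.leadingCoeff, hdeg] at h

theorem irreducible_of_irreducible_leadingCoeff_weightedSubst {w : σ → ℕ} {f : MvPolynomial σ R}
    (h : Irreducible (weightedSubst w f).leadingCoeff) : Irreducible f := by
  refine ⟨fun hf => h.not_isUnit ?_, fun g₁ g₂ hg => ?_⟩
  · obtain ⟨r, hr, hCr⟩ := Polynomial.isUnit_iff.mp (hf.map (weightedSubst w))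
    rwa [← hCr, Polynomial.leadingCoeff_C]
  · rw [hg, map_mul, Polynomial.leadingCoeff_mul] at h
    exact (h.isUnit_or_isUnit rfl).imp isUnit_of_isUnit_leadingCoeff_weightedSubst
      isUnit_of_isUnit_leadingCoeff_weightedSubst

theorem natDegree_weightedSubst_aeval_X (w : σ → ℕ) (i : σ) (g : R[X]) :
    (weightedSubst w (Polynomial.aeval (X i : MvPolynomial σ R) g)).natDegree =
      g.natDegree * w i := by
  rw [weightedSubst_aeval_X, Polynomial.natDegree_comp,
    Polynomial.natDegree_map_eq_of_injective (C_injective σ R),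
    Polynomial.natDegree_C_mul_X_pow _ _ (X_ne_zero i)]

theorem leadingCoeff_weightedSubst_aeval_X {w : σ → ℕ} {i : σ} (hw : w i ≠ 0) (g : R[X]) :
    (weightedSubst w (Polynomial.aeval (X i : MvPolynomial σ R) g)).leadingCoeff =
      C g.leadingCoeff * X i ^ g.natDegree := by
  rw [weightedSubst_aeval_X, Polynomial.leadingCoeff_comp,
    Polynomial.leadingCoeff_map_of_injective (C_injective σ R),
    Polynomial.natDegree_map_eq_of_injective (C_injective σ R), Polynomial.leadingCoeff_C_mul_X_pow]
  rwa [Polynomial.natDegree_C_mul_X_pow _ _ (X_ne_zero i)]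

theorem leadingCoeff_weightedSubst_sum_aeval_X [Fintype σ] (g : σ → R[X]) {w : σ → ℕ} {M : ℕ}
    (hM : 0 < M) (hw : ∀ i, 0 < (g i).natDegree → (g i).natDegree * w i = M)
    (hne : ∑ i with 0 < (g i).natDegree, C (g i).leadingCoeff * X i ^ (g i).natDegree ≠ 0) :
    (weightedSubst w (∑ i, Polynomial.aeval (X i : MvPolynomial σ R) (g i))).leadingCoeff =
      ∑ i with 0 < (g i).natDegree, C (g i).leadingCoeff * X i ^ (g i).natDegree := by
  have hterm (i : σ) :
      (weightedSubst w (Polynomial.aeval (X i : MvPolynomial σ R) (g i))).coeff M =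
        if 0 < (g i).natDegree then C (g i).leadingCoeff * X i ^ (g i).natDegree else 0 := by
    split_ifs with hi
    · rw [← leadingCoeff_weightedSubst_aeval_X (right_ne_zero_of_mul (hw i hi ▸ hM.ne')),
        Polynomial.leadingCoeff, natDegree_weightedSubst_aeval_X, hw i hi]
    · refine Polynomial.coeff_eq_zero_of_natDegree_lt ?_
      rwa [natDegree_weightedSubst_aeval_X, Nat.eq_zero_of_not_pos hi, zero_mul]
  have hcoeff : (weightedSubst w (∑ i, Polynomial.aeval (X i : MvPolynomial σ R) (g i))).coeff M =
      ∑ i with 0 < (g i).natDegree, C (g i).leadingCoeff * X i ^ (g i).natDegree := by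
    rw [map_sum, Polynomial.finsetSum_coeff, Finset.sum_filter]
    exact Finset.sum_congr rfl fun i _ => hterm i
  have hle :
      (weightedSubst w (∑ i, Polynomial.aeval (X i : MvPolynomial σ R) (g i))).natDegree ≤ M := by
    rw [map_sum]
    refine Polynomial.natDegree_sum_le_of_forall_le _ _ fun i _ => ?_
    rw [natDegree_weightedSubst_aeval_X]
    rcases Nat.eq_zero_or_pos (g i).natDegree with hi | hi
    · simp [hi]
    · exact (hw i hi).le
  rw [Polynomial.leadingCoeff,
    Polynomial.natDegree_eq_of_le_of_coeff_ne_zero hle (hcoeff ▸ hne), hcoeff]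

end WeightedSubst

end MvPolynomial

/-- A sum of univariate polynomials `p = p₁(z₁) + ⋯ + pₙ(zₙ)` over `ℚ`
that depends on at least 3 variables (i.e. `∂p/∂zᵢ ≠ 0` for at least three indices)
is irreducible in `ℚ[z₁,…,zₙ]`. -/
theorem stmt13 (n : ℕ) (q : Fin n → Polynomial ℚ) (p : MvPolynomial (Fin n) ℚ)
    (hp : p = ∑ i, Polynomial.aeval (MvPolynomial.X i) (q i))
    (h3 : 3 ≤ {i : Fin n | MvPolynomial.pderiv i p ≠ 0}.ncard) :
    Irreducible p := by
  classical
  subst hp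
  have hT : 2 < (Finset.univ.filter fun i => 0 < (q i).natDegree).card := by
    simp_rw [MvPolynomial.pderiv_sum_aeval_X_ne_zero_iff] at h3
    rwa [← Set.ncard_coe_finset, Finset.coe_filter_univ]
  set T := Finset.univ.filter fun i => 0 < (q i).natDegree
  set M := ∏ i ∈ T, (q i).natDegree
  have hM : 0 < M := Finset.prod_pos fun i hi => (Finset.mem_filter.mp hi).2
  have hw (i : Fin n) (hi : 0 < (q i).natDegree) : (q i).natDegree * (M / (q i).natDegree) = M :=
    Nat.mul_div_cancel' (Finset.dvd_prod_of_mem _ (Finset.mem_filter.mpr ⟨Finset.mem_univ i, hi⟩))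
  have hirr := MvPolynomial.irreducible_sum_C_mul_X_pow hT
    (fun i hi => Polynomial.leadingCoeff_ne_zero.mpr
      (Polynomial.ne_zero_of_natDegree_gt (Finset.mem_filter.mp hi).2))
    (fun i hi => (Finset.mem_filter.mp hi).2)
  apply MvPolynomial.irreducible_of_irreducible_leadingCoeff_weightedSubst
    (w := fun i => M / (q i).natDegree)
  rwa [MvPolynomial.leadingCoeff_weightedSubst_sum_aeval_X q hM hw hirr.ne_zero]
end
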